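/- Let (r,c) be an F-target of D ∈ MBPD(n) with window [r,r+1]×[b,c']. Then every tile of F_r(D) in rows r, r+1 and columns b through c' is light, except possibly the tile at (r+1,c'); and the tile of F_r(D) at (r+1,c') is light if and only if (r,c) is an f*-target of D (Case T). -/
import Mathlib


namespace BPD

/-- The seven tiles of a marked bumpless pipedream:
blank, horizontal, vertical, plus, R, J, marked J. -/
inductive Tile
  | blank | horiz | vert | plus | rtile | jtile | mjtile
  deriving DecidableEq

/-- Does the tile contain a pipe end on its left edge? -/
def Tile.left : Tile → Bool
  | .horiz | .plus | .jtile | .mjtile => true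
  | _ => false

/-- Does the tile contain a pipe end on its right edge? -/
def Tile.right : Tile → Bool
  | .horiz | .plus | .rtile => true
  | _ => false

/-- Does the tile contain a pipe end on its top edge? -/
def Tile.up : Tile → Bool
  | .vert | .plus | .jtile | .mjtile => true
  | _ => false

/-- Does the tile contain a pipe end on its bottom edge? -/
def Tile.down : Tile → Bool
  | .vert | .plus | .rtile => true
  | _ => false

/-- A tile is heavy if it is a blank or a marked J; light otherwise. -/
def Tile.Heavy (t : Tile) : Prop := t = Tile.blank ∨ t = Tile.mjtile

instance : DecidablePred Tile.Heavy := fun t =>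
  decidable_of_iff (t = Tile.blank ∨ t = Tile.mjtile) Iff.rfl

/-- Tile matrices, with the meaningful rows/columns indexed by `1, …, n`. -/
abbrev Grid := ℕ → ℕ → Tile

/-- A valid marked bumpless pipedream of size `n`: pipe ends of adjacent tiles
match, a pipe enters every row from the right boundary, a pipe leaves every
column through the bottom boundary, no pipe meets the top or left boundary,
and (as a normalization making an `n × n` matrix) all entries outside the
board are `blank`. -/
def IsMBPD (n : ℕ) (D : Grid) : Prop :=
  (∀ i j, 1 ≤ i → i ≤ n → 1 ≤ j → j + 1 ≤ n → (D i j).right = (D i (j+1)).left) ∧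
  (∀ i j, 1 ≤ i → i + 1 ≤ n → 1 ≤ j → j ≤ n → (D i j).down = (D (i+1) j).up) ∧
  (∀ i, 1 ≤ i → i ≤ n → (D i n).right = true) ∧
  (∀ j, 1 ≤ j → j ≤ n → (D n j).down = true) ∧
  (∀ j, 1 ≤ j → j ≤ n → (D 1 j).up = false) ∧
  (∀ i, 1 ≤ i → i ≤ n → (D i 1).left = false) ∧
  (∀ i j, ¬ (1 ≤ i ∧ i ≤ n ∧ 1 ≤ j ∧ j ≤ n) → D i j = Tile.blank)

/-- `D_{r,[b,c]}` is a pipe segment: every strictly interior tile is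
horizontal or plus. -/
def PipeSegment (D : Grid) (r b c : ℕ) : Prop :=
  ∀ j < c, b < j → (D r j = Tile.horiz ∨ D r j = Tile.plus)

instance (D : Grid) (r b c : ℕ) : Decidable (PipeSegment D r b c) :=
  inferInstanceAs (Decidable (∀ j < c, b < j → (D r j = Tile.horiz ∨ D r j = Tile.plus)))

/-- `D_{[r,r+1],[b,d]}` is a doublecross. -/
def Doublecross (D : Grid) (r b d : ℕ) : Prop :=
  b < d ∧ PipeSegment D r b d ∧ PipeSegment D (r+1) b d ∧
    D r b = Tile.rtile ∧ D (r+1) d = Tile.jtile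

/-- The RJ subsequence of the tiles of row `r` in columns `a, …, b-1`. -/
def rjWord (D : Grid) (r a b : ℕ) : List Tile :=
  ((List.Ico a b).map (D r)).filter (fun t => decide (t = Tile.rtile ∨ t = Tile.jtile))

/-- A paired RJ word: zero or more consecutive pairs (an R then a J). -/
inductive Paired : List Tile → Prop
  | nil : Paired []
  | cons {w : List Tile} : Paired w → Paired (Tile.rtile :: Tile.jtile :: w)

/-- A single J followed by a paired word. -/
def TypeJ (w : List Tile) : Prop := ∃ w', Paired w' ∧ w = Tile.jtile :: w'

/-- A paired word followed by a single R. -/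
def TypeR (w : List Tile) : Prop := ∃ w', Paired w' ∧ w = w' ++ [Tile.rtile]

/-- A single J, then a paired word, then a single R. -/
def TypeJR (w : List Tile) : Prop :=
  ∃ w', Paired w' ∧ w = Tile.jtile :: (w' ++ [Tile.rtile])

/-- `D` admits the `(r,[b,d])`-droop. -/
def AdmitsDroop (D : Grid) (r b d : ℕ) : Prop :=
  b < d ∧
  (∀ j, b ≤ j → j ≤ d → ¬ (D r j).Heavy) ∧
  (∀ j, b ≤ j → j < d → ¬ (D (r+1) j).Heavy) ∧
  D (r+1) d ≠ Tile.mjtile ∧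
  PipeSegment D r b d ∧
  Paired (rjWord D (r+1) (b+1) d) ∧
  D r b ≠ Tile.horiz ∧ D r d ≠ Tile.plus

/-- `D` admits the `(r,[b,d])`-undroop. -/
def AdmitsUndroop (D : Grid) (r b d : ℕ) : Prop :=
  b < d ∧
  (∀ j, b ≤ j → j ≤ d → ¬ (D (r+1) j).Heavy) ∧
  (∀ j, b < j → j ≤ d → ¬ (D r j).Heavy) ∧
  D r b ≠ Tile.mjtile ∧
  PipeSegment D (r+1) b d ∧
  Paired (rjWord D r (b+1) d) ∧
  D (r+1) d ≠ Tile.horiz ∧ D (r+1) b ≠ Tile.plus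

/-- The (unmarked) tile with the given pipe ends on its
left/right/top/bottom edges (junk value `blank` for impossible combinations). -/
def mkTile : Bool → Bool → Bool → Bool → Tile
  | false, false, false, false => Tile.blank
  | true,  true,  false, false => Tile.horiz
  | false, false, true,  true  => Tile.vert
  | true,  true,  true,  true  => Tile.plus
  | false, true,  false, true  => Tile.rtile
  | true,  false, true,  false => Tile.jtile
  | _, _, _, _ => Tile.blank

/-- The `(r,[b,d])`-droop: the pipe segment of row `r` in columns `b, …, d`
drops to row `r+1`, kinks of row `r+1` strictly between columns `b` and `d`
move up to row `r`, vertical pipes are unchanged, and the corners transform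
as `R → blank` or `plus → J` at `(r,b)` and `blank → J` or `R → plus` at
`(r+1,d)`. -/
def droop (D : Grid) (r b d : ℕ) : Grid := fun i j =>
  if i = r ∧ j = b then mkTile (D r b).left false (D r b).up false
  else if i = r ∧ j = d then mkTile false (D r d).right (D r d).up true
  else if i = r + 1 ∧ j = b then mkTile (D (r+1) b).left true false (D (r+1) b).down
  else if i = r + 1 ∧ j = d then mkTile true (D (r+1) d).right true (D (r+1) d).down
  else if i = r ∧ b < j ∧ j < d then
    mkTile (D (r+1) j).left (D (r+1) j).right (D r j).up (D (r+1) j).down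
  else if i = r + 1 ∧ b < j ∧ j < d then
    mkTile (D r j).left (D r j).right (D (r+1) j).down (D (r+1) j).down
  else D i j

/-- The `(r,[b,d])`-undroop, inverse to the `(r,[b,d])`-droop: the pipe
segment of row `r+1` in columns `b, …, d` moves up to row `r`, kinks of row
`r` move down to row `r+1`, vertical pipes are unchanged, and the corners
transform as `blank → R` or `J → plus` at `(r,b)` and `J → blank` or
`plus → R` at `(r+1,d)`. -/
def undroop (D : Grid) (r b d : ℕ) : Grid := fun i j =>
  if i = r ∧ j = b then mkTile (D r b).left true (D r b).up true
  else if i = r ∧ j = d then mkTile true (D r d).right (D r d).up false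
  else if i = r + 1 ∧ j = b then mkTile (D (r+1) b).left false true (D (r+1) b).down
  else if i = r + 1 ∧ j = d then mkTile false (D (r+1) d).right false (D (r+1) d).down
  else if i = r ∧ b < j ∧ j < d then
    mkTile (D (r+1) j).left (D (r+1) j).right (D r j).up (D r j).up
  else if i = r + 1 ∧ b < j ∧ j < d then
    mkTile (D r j).left (D r j).right (D r j).up (D (r+1) j).down
  else D i j

/-- Remove the mark at `(r,c)` (if the tile there is a marked J). -/
def unmark (D : Grid) (r c : ℕ) : Grid := fun i j =>
  if i = r ∧ j = c ∧ D r c = Tile.mjtile then Tile.jtile else D i j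

/-- Mark the tile at `(r,c)` if it is a J tile. -/
def markIfJ (D : Grid) (r c : ℕ) : Grid := fun i j =>
  if i = r ∧ j = c ∧ D r c = Tile.jtile then Tile.mjtile else D i j

/-- `(r,c)` is an f-target of `D` with associated column `c'` (conditions
(f1), (f2) with `c'` minimal, (f3)). -/
def IsfTarget (n : ℕ) (D : Grid) (r c c' : ℕ) : Prop :=
  1 ≤ r ∧ r + 1 ≤ n ∧ 1 ≤ c ∧ c ≤ n ∧
  (D r c).Heavy ∧ (∀ j, c < j → j ≤ n → ¬ (D r j).Heavy) ∧
  c < c' ∧ c' ≤ n ∧ D (r+1) c' = Tile.jtile ∧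
  (∀ j, c < j → j < c' → D (r+1) j ≠ Tile.jtile) ∧
  (∀ j, 1 ≤ j → j < c' → ¬ (D (r+1) j).Heavy)

/-- `(r,c)` is an f*-target of `D` with associated column `c'` (conditions
(f1), (f*2) with `c'` the largest column carrying an R tile in row `r`, (f3)). -/
def IsfStarTarget (n : ℕ) (D : Grid) (r c c' : ℕ) : Prop :=
  1 ≤ r ∧ r + 1 ≤ n ∧ 1 ≤ c ∧ c ≤ n ∧
  (D r c).Heavy ∧ (∀ j, c < j → j ≤ n → ¬ (D r j).Heavy) ∧
  (∀ j, c < j → j ≤ n → D (r+1) j ≠ Tile.jtile ∧ D (r+1) j ≠ Tile.mjtile) ∧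
  1 ≤ c' ∧ c' ≤ n ∧ D r c' = Tile.rtile ∧
  (∀ j, c' < j → j ≤ n → D r j ≠ Tile.rtile) ∧
  (∀ j, 1 ≤ j → j < c' → ¬ (D (r+1) j).Heavy)

/-- An F-target is an f-target or an f*-target. -/
def IsFTarget (n : ℕ) (D : Grid) (r c c' : ℕ) : Prop :=
  IsfTarget n D r c c' ∨ IsfStarTarget n D r c c'

/-- Case B (blank) for an F-target. -/
def FCaseB (D : Grid) (r c : ℕ) : Prop := D r c = Tile.blank

/-- `b` is the left column of the window of the F-target `(r,c)`. -/
def FWindowLeft (D : Grid) (r c b : ℕ) : Prop :=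
  (D r c = Tile.blank ∧ b = c) ∨
  (D r c = Tile.mjtile ∧ 1 ≤ b ∧ b < c ∧ D r b = Tile.rtile ∧
    ∀ j, b < j → j < c → D r j ≠ Tile.rtile)

/-- Case C (crossing) for an F-target with window-left column `b`. -/
def FCaseC (D : Grid) (r c b : ℕ) : Prop :=
  D r c = Tile.mjtile ∧ PipeSegment D (r+1) b c

/-- Case C̸ (noncrossing) for an F-target with window-left column `b`. -/
def FCaseCbar (D : Grid) (r c b : ℕ) : Prop :=
  D r c = Tile.mjtile ∧ ¬ PipeSegment D (r+1) b c

/-- Case T (terminal) for an F-target. -/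
def FCaseT (n : ℕ) (D : Grid) (r c c' : ℕ) : Prop := IsfStarTarget n D r c c'

/-- Case D (doublecross) for an F-target. -/
def FCaseD (n : ℕ) (D : Grid) (r c c' : ℕ) : Prop :=
  IsfTarget n D r c c' ∧ ∃ d, c < d ∧ d < c' ∧ Doublecross D r d c'

/-- Case O (ordinary) for an F-target. -/
def FCaseO (n : ℕ) (D : Grid) (r c c' : ℕ) : Prop :=
  IsfTarget n D r c c' ∧ ¬ ∃ d, c < d ∧ d < c' ∧ Doublecross D r d c'

/-- `ρ` is the right droop column of the F-target `(r,c)` with associated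
column `c'`: `ρ = c'` in Cases T and O, and `ρ = d` in Case D. -/
def FRightDroop (n : ℕ) (D : Grid) (r c c' ρ : ℕ) : Prop :=
  ((FCaseT n D r c c' ∨ FCaseO n D r c c') ∧ ρ = c') ∨
  (IsfTarget n D r c c' ∧ c < ρ ∧ ρ < c' ∧ Doublecross D r ρ c')

/-- The F-move at the F-target `(r,c)` with window-left column `b`,
associated column `c'` and right droop column `ρ`: remove the mark at
`(r,c)` if marked; in Cases B and C (i.e. when `D_{r+1,[b,c]}` is a pipe
segment) perform the `(r,[c,ρ])`-undroop; then mark `(r+1,c')` if it is a J. -/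
def Fmove (D : Grid) (r c b c' ρ : ℕ) : Grid :=
  markIfJ
    (if PipeSegment D (r+1) b c then undroop (unmark D r c) r c ρ else unmark D r c)
    (r+1) c'

/-- `(r+1,c)` is an e-target of `D` with `c'` as in condition (e2)
(conditions (e1), (e2) with `c'` maximal, (e3)). -/
def IseTarget (n : ℕ) (D : Grid) (r c c' : ℕ) : Prop :=
  1 ≤ r ∧ r + 1 ≤ n ∧ 1 ≤ c ∧ c ≤ n ∧
  (D (r+1) c).Heavy ∧ (∀ j, 1 ≤ j → j < c → ¬ (D (r+1) j).Heavy) ∧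
  1 ≤ c' ∧ c' < c ∧ D r c' = Tile.rtile ∧ ¬ PipeSegment D (r+1) c' c ∧
  (∀ j, c' < j → j < c → D r j = Tile.rtile → PipeSegment D (r+1) j c) ∧
  (∀ j, c' < j → j ≤ n → ¬ (D r j).Heavy)

/-- `(r+1,c)` is an e*-target of `D` with `c'` as in condition (e2)
(conditions (e*1), (e2) with `c'` maximal, (e3)). -/
def IseStarTarget (n : ℕ) (D : Grid) (r c c' : ℕ) : Prop :=
  1 ≤ r ∧ r + 1 ≤ n ∧ 1 ≤ c ∧ c ≤ n ∧
  (∀ j, 1 ≤ j → j ≤ n → ¬ (D (r+1) j).Heavy) ∧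
  (D r c = Tile.rtile ∨ D (r+1) c = Tile.rtile) ∧
  (∀ j, c < j → j ≤ n → D r j ≠ Tile.rtile ∧ D (r+1) j ≠ Tile.rtile) ∧
  1 ≤ c' ∧ c' < c ∧ D r c' = Tile.rtile ∧ ¬ PipeSegment D (r+1) c' c ∧
  (∀ j, c' < j → j < c → D r j = Tile.rtile → PipeSegment D (r+1) j c) ∧
  (∀ j, c' < j → j ≤ n → ¬ (D r j).Heavy)

/-- An E-target is an e-target or an e*-target. -/
def IsETarget (n : ℕ) (D : Grid) (r c c' : ℕ) : Prop :=
  IseTarget n D r c c' ∨ IseStarTarget n D r c c'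

/-- Case L (left turn) for an E-target `(r+1,c)` with window-left `c'`. -/
def ECaseL (D : Grid) (r c c' : ℕ) : Prop := ¬ PipeSegment D r c' c

/-- Case D (doublecross) for an E-target. -/
def ECaseD (D : Grid) (r c c' : ℕ) : Prop :=
  PipeSegment D r c' c ∧ ∃ d, Doublecross D r c' d

/-- Case S (straight) for an E-target. -/
def ECaseS (D : Grid) (r c c' : ℕ) : Prop :=
  PipeSegment D r c' c ∧ ¬ ∃ d, Doublecross D r c' d

/-- Case I (initial) for an E-target. -/
def ECaseI (n : ℕ) (D : Grid) (r c c' : ℕ) : Prop := IseStarTarget n D r c c'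

/-- Case P (plus) for an E-target. -/
def ECaseP (n : ℕ) (D : Grid) (r c c' : ℕ) : Prop :=
  IseTarget n D r c c' ∧ D r c = Tile.plus

/-- Case P̸ (no plus) for an E-target. -/
def ECasePbar (n : ℕ) (D : Grid) (r c c' : ℕ) : Prop :=
  IseTarget n D r c c' ∧ D r c ≠ Tile.plus

/-- `lam` is the left droop column of the E-target `(r+1,c)` with
window-left `c'`. -/
def ELeftDroop (D : Grid) (r c c' lam : ℕ) : Prop :=
  (ECaseS D r c c' ∧ lam = c') ∨
  (ECaseD D r c c' ∧ c' < lam ∧ D (r+1) lam = Tile.jtile ∧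
    ∀ j, c' < j → j < lam → D (r+1) j ≠ Tile.jtile) ∨
  (ECaseL D r c c' ∧ c' < lam ∧ D r lam = Tile.jtile ∧
    ∀ j, c' < j → j < lam → D r j ≠ Tile.jtile)

/-- `ρ` is the right droop column of the E-target `(r+1,c)` with
window-left `c'`. -/
def ERightDroop (n : ℕ) (D : Grid) (r c c' ρ : ℕ) : Prop :=
  ((ECaseI n D r c c' ∨ ECasePbar n D r c c') ∧ ρ = c) ∨
  (ECaseP n D r c c' ∧ ρ < c ∧ D (r+1) ρ = Tile.rtile ∧
    ∀ j, ρ < j → j < c → D (r+1) j ≠ Tile.rtile)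

/-- The E-move at the E-target `(r+1,c)` with window-left column `c'`,
left droop column `lam` and right droop column `ρ`: remove the mark at
`(r+1,c)` if marked; in Cases S and D (i.e. when `D_{r,[c',c]}` is a pipe
segment) perform the `(r,[lam,ρ])`-droop; then mark `(r,lam)` if it is a J. -/
def Emove (D : Grid) (r c c' lam ρ : ℕ) : Grid :=
  markIfJ
    (if PipeSegment D r c' c then droop (unmark D (r+1) c) r lam ρ
     else unmark D (r+1) c)
    r lam

/-- Demazure (0-Hecke) product `s_a * w` (left multiplication by a simple
reflection): it is `s_a w` when `ℓ(s_a w) = ℓ(w) + 1`, i.e. when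
`w⁻¹ a < w⁻¹ (a+1)`, and `w` otherwise. -/
def dmul (a : ℕ) (w : Equiv.Perm ℕ) : Equiv.Perm ℕ :=
  if w⁻¹ a < w⁻¹ (a+1) then Equiv.swap a (a+1) * w else w

/-- Demazure (0-Hecke) product `w * s_a` (right multiplication by a simple
reflection): it is `w s_a` when `ℓ(w s_a) = ℓ(w) + 1`, i.e. when
`w a < w (a+1)`, and `w` otherwise. -/
def rdmul (w : Equiv.Perm ℕ) (a : ℕ) : Equiv.Perm ℕ :=
  if w a < w (a+1) then w * Equiv.swap a (a+1) else w

/-- The permutation `w(B) = s_{a_ℓ} * ⋯ * s_{a_1}` (Demazure product)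
associated to a sequence of biletters `B = ((i_1,a_1), …, (i_ℓ,a_ℓ))`. -/
def cpPerm (B : List (ℕ × ℕ)) : Equiv.Perm ℕ :=
  B.foldl (fun w p => dmul p.2 w) 1

/-- Coxeter length (inversion count on `{1,…,n}`) of a permutation
supported on `{1,…,n}`. -/
def lenPerm (n : ℕ) (w : Equiv.Perm ℕ) : ℕ :=
  (((Finset.Icc 1 n) ×ˢ (Finset.Icc 1 n)).filter
    (fun p => p.1 < p.2 ∧ w p.2 < w p.1)).card

/-- The list of states `(row, column, entered-from-East?)` visited by the pipe
of an MBPD beginning at the given state (with fuel). In an MBPD, every pipe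
moves only left and down. -/
def visitsFuel (n : ℕ) (D : Grid) : ℕ → ℕ → ℕ → Bool → List (ℕ × ℕ × Bool)
  | 0, _, _, _ => []
  | fuel+1, r, c, true =>
    (r, c, true) ::
      (match D r c with
       | Tile.horiz | Tile.plus => if 1 < c then visitsFuel n D fuel r (c-1) true else []
       | Tile.rtile => if r < n then visitsFuel n D fuel (r+1) c false else []
       | _ => [])
  | fuel+1, r, c, false =>
    (r, c, false) ::
      (match D r c with
       | Tile.vert | Tile.plus => if r < n then visitsFuel n D fuel (r+1) c false else []
       | Tile.jtile | Tile.mjtile => if 1 < c then visitsFuel n D fuel r (c-1) true else []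
       | _ => [])

/-- The pipe entering the right boundary of the MBPD at row `i` passes
through the tile `(r,c)`, entering it from the East (`e = true`) or from the
North (`e = false`). -/
def Visits (n : ℕ) (D : Grid) (i r c : ℕ) (e : Bool) : Prop :=
  (r, c, e) ∈ visitsFuel n D (2*n+2) i n true

/-- Pipes `i` and `j` of the MBPD cross at the plus tile `(r,c)`. -/
def CrossAt (n : ℕ) (D : Grid) (i j r c : ℕ) : Prop :=
  D r c = Tile.plus ∧
    ((Visits n D i r c true ∧ Visits n D j r c false) ∨
     (Visits n D i r c false ∧ Visits n D j r c true))

/-- Pipes `i` and `j` of the MBPD cross (at least once). -/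
def Crosses (n : ℕ) (D : Grid) (i j : ℕ) : Prop := ∃ r c, CrossAt n D i j r c

open Classical in
/-- The permutation associated to an MBPD: the pipe entering the right
boundary at row `i` exits the bottom boundary at column `w(i)`, where
crossings of a pair of pipes after their first crossing are ignored.
Equivalently, it is the unique permutation of `{1,…,n}` whose inversions are
exactly the pairs of pipes that cross at least once. -/
noncomputable def permOf (n : ℕ) (D : Grid) : Equiv.Perm ℕ :=
  if h : ∃ w : Equiv.Perm ℕ,
      (∀ k, (k < 1 ∨ n < k) → w k = k) ∧
      (∀ i j, 1 ≤ i → i < j → j ≤ n → (w j < w i ↔ Crosses n D i j))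
  then h.choose else 1

/-- An unmarked, reduced MBPD: no marked J tile, and no two pipes cross more
than once. -/
def ReducedMBPD (n : ℕ) (D : Grid) : Prop :=
  (∀ i j, D i j ≠ Tile.mjtile) ∧
  (∀ i j, 1 ≤ i → i < j → j ≤ n →
    ∀ r c r' c', CrossAt n D i j r c → CrossAt n D i j r' c' → r = r' ∧ c = c')

/-- A biletter: a pair `(i,a)` with `1 ≤ i ≤ a < n`. -/
def IsBiletter (n : ℕ) (p : ℕ × ℕ) : Prop := 1 ≤ p.1 ∧ p.1 ≤ p.2 ∧ p.2 < n

/-- The order on biletters: `p > q` iff `p.1 > q.1`, or `p.1 = q.1` and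
`p.2 < q.2`. -/
def BiletterGT (p q : ℕ × ℕ) : Prop := q.1 < p.1 ∨ (q.1 = p.1 ∧ p.2 < q.2)

/-- A reverse compatible pair: a strictly decreasing sequence of biletters. -/
def IsRCP (n : ℕ) (B : List (ℕ × ℕ)) : Prop :=
  (∀ p ∈ B, IsBiletter n p) ∧ B.Chain' BiletterGT

/-- The weight of a sequence of biletters: coordinate `i` counts the
biletters with first entry `i`. -/
def cpWeight (B : List (ℕ × ℕ)) (i : ℕ) : ℕ := B.countP (fun p => decide (p.1 = i))

/-- The weight of an MBPD: coordinate `i` counts the heavy tiles in row `i`. -/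
def rowWeight (n : ℕ) (D : Grid) (i : ℕ) : ℕ :=
  ((Finset.Icc 1 n).filter (fun j => (D i j).Heavy)).card

/-- The tiles of a (not necessarily reduced) pipedream: plus, bump, and the
J tile used on the antidiagonal boundary. -/
inductive PDTile
  | pplus | bump | pj
  deriving DecidableEq

/-- A pipedream of size `n`: a tiling of the staircase
`{(i,j) : i + j ≤ n + 1}` with J tiles exactly on the antidiagonal
`i + j = n + 1` and plus or bump tiles elsewhere (normalized to `bump`
outside the staircase). -/
def IsPD (n : ℕ) (P : ℕ → ℕ → PDTile) : Prop :=
  (∀ i j, 1 ≤ i → 1 ≤ j → i + j = n + 1 → P i j = PDTile.pj) ∧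
  (∀ i j, 1 ≤ i → 1 ≤ j → i + j ≤ n → (P i j = PDTile.pplus ∨ P i j = PDTile.bump)) ∧
  (∀ i j, ¬ (1 ≤ i ∧ 1 ≤ j ∧ i + j ≤ n + 1) → P i j = PDTile.bump)

/-- The tiling of the staircase with plus tiles exactly at the positions
`(i_k, a_k - i_k + 1)` for the biletters `(i_k, a_k)` of `B`, bump tiles at
all other interior positions, and J tiles on the antidiagonal. -/
def rcpToPD (n : ℕ) (B : List (ℕ × ℕ)) : ℕ → ℕ → PDTile := fun i j =>
  if 1 ≤ i ∧ 1 ≤ j ∧ i + j ≤ n + 1 then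
    if i + j = n + 1 then PDTile.pj
    else if (i, i + j - 1) ∈ B then PDTile.pplus else PDTile.bump
  else PDTile.bump

/-- The list of states `(row, column, entered-from-West?)` visited by a pipe
of a pipedream beginning at the given state (with fuel). In a pipedream,
every pipe moves only right and up. -/
def pdVisitsFuel (n : ℕ) (P : ℕ → ℕ → PDTile) : ℕ → ℕ → ℕ → Bool → List (ℕ × ℕ × Bool)
  | 0, _, _, _ => []
  | fuel+1, r, c, true =>
    (r, c, true) ::
      (match P r c with
       | PDTile.pplus => if c < n then pdVisitsFuel n P fuel r (c+1) true else []
       | PDTile.bump | PDTile.pj =>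
           if 1 < r then pdVisitsFuel n P fuel (r-1) c false else [])
  | fuel+1, r, c, false =>
    (r, c, false) ::
      (match P r c with
       | PDTile.pplus => if 1 < r then pdVisitsFuel n P fuel (r-1) c false else []
       | PDTile.bump => if c < n then pdVisitsFuel n P fuel r (c+1) true else []
       | PDTile.pj => [])

/-- The pipe entering the left boundary of the pipedream at row `i` passes
through the tile `(r,c)`, entering it from the West (`e = true`) or from the
South (`e = false`). -/
def PDVisits (n : ℕ) (P : ℕ → ℕ → PDTile) (i r c : ℕ) (e : Bool) : Prop :=
  (r, c, e) ∈ pdVisitsFuel n P (2*n+2) i 1 true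

/-- Pipes `i` and `j` of a pipedream cross (at least once). -/
def PDCrosses (n : ℕ) (P : ℕ → ℕ → PDTile) (i j : ℕ) : Prop :=
  ∃ r c, P r c = PDTile.pplus ∧
    ((PDVisits n P i r c true ∧ PDVisits n P j r c false) ∨
     (PDVisits n P i r c false ∧ PDVisits n P j r c true))

open Classical in
/-- The permutation associated to a pipedream: the pipe entering the left
boundary at row `i` exits the top boundary at column `w(i)`, where crossings
of a pair of pipes after their first crossing are ignored. Equivalently, it
is the unique permutation of `{1,…,n}` whose inversions are exactly the pairs
of pipes that cross at least once. -/
noncomputable def pdPermOf (n : ℕ) (P : ℕ → ℕ → PDTile) : Equiv.Perm ℕ :=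
  if h : ∃ w : Equiv.Perm ℕ,
      (∀ k, (k < 1 ∨ n < k) → w k = k) ∧
      (∀ i j, 1 ≤ i → i < j → j ≤ n → (w j < w i ↔ PDCrosses n P i j))
  then h.choose else 1

/-- The weight of a pipedream: coordinate `i` counts the plus tiles in row `i`. -/
def pdWeight (n : ℕ) (P : ℕ → ℕ → PDTile) (i : ℕ) : ℕ :=
  ((Finset.Icc 1 n).filter (fun j => P i j = PDTile.pplus)).card

section Helpers

lemma unmark_eval (D : Grid) (r c i j : ℕ) (h : ¬ (i = r ∧ j = c)) :
    unmark D r c i j = D i j := by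
  unfold unmark; rw [if_neg (by tauto)]

lemma markIfJ_eval (D : Grid) (r c i j : ℕ) (h : ¬ (i = r ∧ j = c)) :
    markIfJ D r c i j = D i j := by
  unfold markIfJ; rw [if_neg (by tauto)]

lemma undroop_rb (D : Grid) (r b d : ℕ) :
    undroop D r b d r b = mkTile (D r b).left true (D r b).up true := by
  unfold undroop; rw [if_pos ⟨rfl, rfl⟩]

lemma undroop_rd (D : Grid) (r b d : ℕ) (h : b < d) :
    undroop D r b d r d = mkTile true (D r d).right (D r d).up false := by
  unfold undroop; rw [if_neg (by omega), if_pos ⟨rfl, rfl⟩]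

lemma undroop_r1b (D : Grid) (r b d : ℕ) (h : b < d) :
    undroop D r b d (r+1) b =
      mkTile (D (r+1) b).left false true (D (r+1) b).down := by
  unfold undroop; rw [if_neg (by omega), if_neg (by omega), if_pos ⟨rfl, rfl⟩]

lemma undroop_r1d (D : Grid) (r b d : ℕ) (h : b < d) :
    undroop D r b d (r+1) d =
      mkTile false (D (r+1) d).right false (D (r+1) d).down := by
  unfold undroop
  rw [if_neg (by omega), if_neg (by omega), if_neg (by omega), if_pos ⟨rfl, rfl⟩]

lemma undroop_rmid (D : Grid) (r b d j : ℕ) (h1 : b < j) (h2 : j < d) :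
    undroop D r b d r j =
      mkTile (D (r+1) j).left (D (r+1) j).right (D r j).up (D r j).up := by
  unfold undroop
  rw [if_neg (by omega), if_neg (by omega), if_neg (by omega), if_neg (by omega),
    if_pos ⟨rfl, h1, h2⟩]

lemma undroop_r1mid (D : Grid) (r b d j : ℕ) (h1 : b < j) (h2 : j < d) :
    undroop D r b d (r+1) j =
      mkTile (D r j).left (D r j).right (D r j).up (D (r+1) j).down := by
  unfold undroop
  rw [if_neg (by omega), if_neg (by omega), if_neg (by omega), if_neg (by omega),
    if_neg (by omega), if_pos ⟨rfl, h1, h2⟩]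

lemma undroop_out (D : Grid) (r b d i j : ℕ) (hbd : b ≤ d)
    (h : (i ≠ r ∧ i ≠ r + 1) ∨ j < b ∨ d < j) :
    undroop D r b d i j = D i j := by
  unfold undroop
  rw [if_neg (by omega), if_neg (by omega), if_neg (by omega), if_neg (by omega),
    if_neg (by omega), if_neg (by omega)]

lemma light_tiles {t : Tile} (h : ¬ t.Heavy) :
    t = .horiz ∨ t = .vert ∨ t = .plus ∨ t = .rtile ∨ t = .jtile := by
  cases t <;> simp_all [Tile.Heavy]

lemma right_true {t : Tile} (h : t.right = true) :
    t = .horiz ∨ t = .plus ∨ t = .rtile := by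
  cases t <;> simp_all [Tile.right]

lemma heavy_right {t : Tile} (h : t.Heavy) : t.right = false := by
  rcases h with h | h <;> simp [h, Tile.right]

lemma heavy_down {t : Tile} (h : t.Heavy) : t.down = false := by
  rcases h with h | h <;> simp [h, Tile.down]

end Helpers

/-- after an F-move at an F-target with window
`[r,r+1] × [b,c']`, all tiles of `F_r(D)` in the window are light except
possibly at `(r+1,c')`, and the tile at `(r+1,c')` is light iff the target is
an f*-target (Case T). -/
theorem statement10 (n : ℕ) (D : Grid) (r c c' b ρ : ℕ) (hD : IsMBPD n D)
    (hT : IsFTarget n D r c c') (hb : FWindowLeft D r c b)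
    (hρ : FRightDroop n D r c c' ρ) :
    (∀ j, b ≤ j → j ≤ c' → ¬ ((Fmove D r c b c' ρ) r j).Heavy) ∧
    (∀ j, b ≤ j → j < c' → ¬ ((Fmove D r c b c' ρ) (r+1) j).Heavy) ∧
    (¬ ((Fmove D r c b c' ρ) (r+1) c').Heavy ↔ IsfStarTarget n D r c c') := by
  obtain ⟨hH, hV, hRt, -, -, -, -⟩ := hD
  have hcom : 1 ≤ r ∧ r + 1 ≤ n ∧ 1 ≤ c ∧ c ≤ n ∧ (D r c).Heavy ∧
      (∀ j, c < j → j ≤ n → ¬ (D r j).Heavy) := by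
    rcases hT with h | h <;>
      exact ⟨h.1, h.2.1, h.2.2.1, h.2.2.2.1, h.2.2.2.2.1, h.2.2.2.2.2.1⟩
  obtain ⟨hr1, hrn, hc1, hcn, hheavy, hf1⟩ := hcom
  have hrcr : (D r c).right = false := heavy_right hheavy
  have hcltn : c < n := by
    rcases Nat.lt_or_ge c n with h | h
    · exact h
    · exfalso
      have hbd := hRt r hr1 (by omega)
      have hcn' : c = n := by omega
      rw [hcn'] at hrcr
      rw [hrcr] at hbd
      exact Bool.false_ne_true hbd
  have hstuff : c < c' ∧ c' ≤ n ∧ (∀ j, 1 ≤ j → j < c' → ¬ (D (r+1) j).Heavy) ∧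
      (∀ j, c < j → j < c' → D (r+1) j ≠ Tile.jtile) := by
    rcases hT with h | h
    · exact ⟨h.2.2.2.2.2.2.1, h.2.2.2.2.2.2.2.1, h.2.2.2.2.2.2.2.2.2.2,
        fun j hj hj' => h.2.2.2.2.2.2.2.2.2.1 j hj hj'⟩
    · obtain ⟨-, -, -, -, -, -, hnoj, hc'1, hc'n, hrt, hmax, hf3⟩ := id h
      have hcc' : c < c' := by
        by_contra hle
        push_neg at hle
        have walk : ∀ m j, j + m = n → c ≤ j → (D r j).right = false → False := by
          intro m
          induction m with
          | zero =>
            intro j hj hcj hr0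
            have hbd := hRt r hr1 (by omega)
            have hjn : j = n := by omega
            rw [hjn] at hr0
            rw [hr0] at hbd
            exact Bool.false_ne_true hbd
          | succ m ih =>
            intro j hj hcj hr0
            have hl : (D r (j+1)).left = false := by
              rw [← hH r j hr1 (by omega) (by omega) (by omega)]; exact hr0
            have hlight := hf1 (j+1) (by omega) (by omega)
            have hnr : D r (j+1) ≠ Tile.rtile := hmax (j+1) (by omega) (by omega)
            have hstep : (D r (j+1)).right = false := by
              rcases light_tiles hlight with h0 | h0 | h0 | h0 | h0
              · rw [h0] at hl; exact absurd hl (by decide)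
              · rw [h0]; rfl
              · rw [h0] at hl; exact absurd hl (by decide)
              · exact absurd h0 hnr
              · rw [h0] at hl; exact absurd hl (by decide)
            exact ih (j+1) (by omega) (by omega) hstep
        exact walk (n - c) c (by omega) le_rfl hrcr
      exact ⟨hcc', hc'n, hf3, fun j hj hj' => (hnoj j hj (by omega)).1⟩
  obtain ⟨hcc', hc'n, hf3, hnoJ⟩ := hstuff
  have hAc : D (r+1) c = Tile.horiz ∨ D (r+1) c = Tile.rtile := by
    have hup0 : (D (r+1) c).up = false := by
      rw [← hV r c hr1 hrn hc1 hcn]; exact heavy_down hheavy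
    rcases light_tiles (hf3 c hc1 hcc') with h0 | h0 | h0 | h0 | h0
    · exact Or.inl h0
    · rw [h0] at hup0; exact absurd hup0 (by decide)
    · rw [h0] at hup0; exact absurd hup0 (by decide)
    · exact Or.inr h0
    · rw [h0] at hup0; exact absurd hup0 (by decide)
  have hBmid : ∀ j, c < j → j < c' → (D (r+1) j = Tile.horiz ∨ D (r+1) j = Tile.plus) := by
    intro j
    induction j using Nat.strong_induction_on with
    | _ j ih =>
      intro hcj hjc'
      have hle : (D (r+1) j).left = true := by
        have heq := hH (r+1) (j-1) (by omega) hrn (by omega) (by omega)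
        have h1 : j - 1 + 1 = j := by omega
        rw [h1] at heq
        rw [← heq]
        by_cases h2 : j - 1 = c
        · rw [h2]; rcases hAc with h0 | h0 <;> rw [h0] <;> rfl
        · rcases ih (j-1) (by omega) (by omega) (by omega) with h0 | h0 <;> rw [h0] <;> rfl
      have hnj := hnoJ j hcj hjc'
      rcases light_tiles (hf3 j (by omega) hjc') with h0 | h0 | h0 | h0 | h0
      · exact Or.inl h0
      · rw [h0] at hle; exact absurd hle (by decide)
      · exact Or.inr h0
      · rw [h0] at hle; exact absurd hle (by decide)
      · exact absurd h0 hnj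
  have hc'left : (D (r+1) c').left = true := by
    have heq := hH (r+1) (c'-1) (by omega) hrn (by omega) (by omega)
    have h1 : c' - 1 + 1 = c' := by omega
    rw [h1] at heq
    rw [← heq]
    by_cases h2 : c' - 1 = c
    · rw [h2]; rcases hAc with h0 | h0 <;> rw [h0] <;> rfl
    · rcases hBmid (c'-1) (by omega) (by omega) with h0 | h0 <;> rw [h0] <;> rfl
  have hc'plus : IsfStarTarget n D r c c' → D (r+1) c' = Tile.plus := by
    intro hstar
    have hrt : D r c' = Tile.rtile := hstar.2.2.2.2.2.2.2.2.2.1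
    have hup1 : (D (r+1) c').up = true := by
      rw [← hV r c' hr1 hrn (by omega) hc'n, hrt]; rfl
    have hnj := hstar.2.2.2.2.2.2.1 c' hcc' hc'n
    cases h0 : D (r+1) c' with
    | blank => rw [h0] at hc'left; exact absurd hc'left (by decide)
    | horiz => rw [h0] at hup1; exact absurd hup1 (by decide)
    | vert => rw [h0] at hc'left; exact absurd hc'left (by decide)
    | plus => rfl
    | rtile => rw [h0] at hc'left; exact absurd hc'left (by decide)
    | jtile => exact absurd h0 hnj.1
    | mjtile => exact absurd h0 hnj.2
  have hnotstar : D (r+1) c' = Tile.jtile → ¬ IsfStarTarget n D r c c' := fun hj hst =>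
    (hst.2.2.2.2.2.2.1 c' hcc' hc'n).1 hj
  have hb1' : 1 ≤ b := by
    rcases hb with ⟨-, hbc⟩ | ⟨-, hb1, -, -, -⟩
    · omega
    · exact hb1
  have hbc0 : b ≤ c := by
    rcases hb with ⟨-, hbc⟩ | ⟨-, -, hbc, -, -⟩ <;> omega
  have hwinr : ∀ j, b ≤ j → j < c → ¬ (D r j).Heavy := by
    rcases hb with ⟨h0, hbc⟩ | ⟨hmj, hb1, hbc, hbrt, hbmax⟩
    · intro j h1 h2; omega
    · have hrowr : ∀ m j, j + m = c → b < j → j < c →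
          (D r j = Tile.horiz ∨ D r j = Tile.plus) := by
        intro m
        induction m with
        | zero => intro j h1 h2 h3; omega
        | succ m ih =>
          intro j h1 h2 h3
          have hrt1 : (D r j).right = true := by
            rw [hH r j hr1 (by omega) (by omega) (by omega)]
            by_cases h4 : j + 1 = c
            · rw [h4, hmj]; rfl
            · rcases ih (j+1) (by omega) (by omega) (by omega) with h0 | h0 <;>
                rw [h0] <;> rfl
          rcases right_true hrt1 with h0 | h0 | h0
          · exact Or.inl h0
          · exact Or.inr h0
          · exact absurd h0 (hbmax j h2 h3)
      intro j h1 h2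
      rcases eq_or_lt_of_le h1 with h3 | h3
      · have h4 : D r j = Tile.rtile := by rw [← h3]; exact hbrt
        rw [h4]; decide
      · rcases hrowr (c - j) j (by omega) h3 h2 with h0 | h0 <;> rw [h0] <;> decide
  -- properties of the undrooped grid
  have hUrc : c < ρ → ¬ ((undroop (unmark D r c) r c ρ) r c).Heavy := by
    intro h1
    have h2 : unmark D r c r c = Tile.blank ∨ unmark D r c r c = Tile.jtile := by
      unfold unmark
      rcases hheavy with h0 | h0 <;> simp [h0]
    rw [undroop_rb]
    rcases h2 with h0 | h0 <;> rw [h0] <;> decide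
  have hUr1c : c < ρ → ¬ ((undroop (unmark D r c) r c ρ) (r+1) c).Heavy := by
    intro h1
    rw [undroop_r1b (unmark D r c) r c ρ h1, unmark_eval D r c (r+1) c (by omega)]
    rcases hAc with h0 | h0 <;> rw [h0] <;> decide
  have hUrρ : c < ρ → (D r ρ = Tile.rtile ∨ D r ρ = Tile.vert) →
      ¬ ((undroop (unmark D r c) r c ρ) r ρ).Heavy := by
    intro h1 h2
    rw [undroop_rd (unmark D r c) r c ρ h1, unmark_eval D r c r ρ (by omega)]
    rcases h2 with h0 | h0 <;> rw [h0] <;> decide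
  have hUmr : ∀ j, c < j → j < ρ → ρ ≤ c' →
      ¬ ((undroop (unmark D r c) r c ρ) r j).Heavy := by
    intro j h1 h2 h3
    rw [undroop_rmid (unmark D r c) r c ρ j h1 h2,
      unmark_eval D r c (r+1) j (by omega), unmark_eval D r c r j (by omega)]
    rcases hBmid j h1 (by omega) with h0 | h0 <;> rw [h0] <;>
      cases h4 : (D r j).up <;> decide
  have hUm1 : ∀ j, c < j → j < ρ → ρ ≤ c' →
      ¬ ((undroop (unmark D r c) r c ρ) (r+1) j).Heavy := by
    intro j h1 h2 h3
    rw [undroop_r1mid (unmark D r c) r c ρ j h1 h2,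
      unmark_eval D r c r j (by omega), unmark_eval D r c (r+1) j (by omega)]
    have hm := hV r j hr1 hrn (by omega) (by omega)
    rcases light_tiles (hf1 j h1 (by omega)) with h0 | h0 | h0 | h0 | h0 <;>
      rcases hBmid j h1 (by omega) with h5 | h5 <;>
        rw [h0, h5] at hm ⊢ <;>
          first
            | decide
            | exact absurd hm (by decide)
  by_cases hPS : PipeSegment D (r+1) b c
  · simp only [Fmove, if_pos hPS]
    rcases hρ with ⟨hTO, hρeq⟩ | ⟨hft, hcρ, hρc', hdc⟩
    · subst ρ
      rcases hTO with hstar | hO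
      · -- Case T
        have hrt : D r c' = Tile.rtile := hstar.2.2.2.2.2.2.2.2.2.1
        have hplus := hc'plus hstar
        refine ⟨?_, ?_, ?_⟩
        · intro j h1 h2
          rw [markIfJ_eval _ (r+1) c' r j (by omega)]
          by_cases h3 : j < c
          · rw [undroop_out (unmark D r c) r c c' r j (by omega) (by omega),
              unmark_eval D r c r j (by omega)]
            exact hwinr j h1 h3
          · by_cases h4 : j = c
            · subst h4; exact hUrc hcc'
            · by_cases h5 : j = c'
              · subst h5; exact hUrρ hcc' (Or.inl hrt)
              · exact hUmr j (by omega) (by omega) le_rfl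
        · intro j h1 h2
          rw [markIfJ_eval _ (r+1) c' (r+1) j (by omega)]
          by_cases h3 : j < c
          · rw [undroop_out (unmark D r c) r c c' (r+1) j (by omega) (by omega),
              unmark_eval D r c (r+1) j (by omega)]
            exact hf3 j (by omega) h2
          · by_cases h4 : j = c
            · subst h4; exact hUr1c hcc'
            · exact hUm1 j (by omega) h2 le_rfl
        · have h6 : undroop (unmark D r c) r c c' (r+1) c' = Tile.rtile := by
            rw [undroop_r1d (unmark D r c) r c c' hcc',
              unmark_eval D r c (r+1) c' (by omega), hplus]
            rfl
          have h7 : markIfJ (undroop (unmark D r c) r c c') (r+1) c' (r+1) c'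
              = Tile.rtile := by
            unfold markIfJ
            rw [if_neg (by simp [h6]), h6]
          rw [h7]
          exact iff_of_true (by decide) hstar
      · -- Case O
        obtain ⟨hft, hnd⟩ := hO
        have hc'J : D (r+1) c' = Tile.jtile := hft.2.2.2.2.2.2.2.2.1
        have hOr : D r c' = Tile.rtile ∨ D r c' = Tile.vert := by
          have hdn : (D r c').down = true := by
            rw [hV r c' hr1 hrn (by omega) hc'n, hc'J]; rfl
          have hnp : D r c' ≠ Tile.plus := by
            intro hp
            have walk : ∀ m j, j = c + m → j < c' →
                (∀ i, j < i → i < c' → D r i = Tile.horiz ∨ D r i = Tile.plus) →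
                (D r j).right = true → False := by
              intro m
              induction m with
              | zero =>
                intro j hj _ _ hrt1
                have hjc : j = c := by omega
                rw [hjc, hrcr] at hrt1
                exact Bool.false_ne_true hrt1
              | succ m ih =>
                intro j hj hjc' hseg hrt1
                rcases right_true hrt1 with h0 | h0 | h0
                · refine ih (j-1) (by omega) (by omega) ?_ ?_
                  · intro i hi hi'
                    by_cases h5 : i = j
                    · rw [h5]; exact Or.inl h0
                    · exact hseg i (by omega) hi'
                  · have heq := hH r (j-1) hr1 (by omega) (by omega) (by omega)
                    have h7 : j - 1 + 1 = j := by omega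
                    rw [h7] at heq
                    rw [heq, h0]; rfl
                · refine ih (j-1) (by omega) (by omega) ?_ ?_
                  · intro i hi hi'
                    by_cases h5 : i = j
                    · rw [h5]; exact Or.inr h0
                    · exact hseg i (by omega) hi'
                  · have heq := hH r (j-1) hr1 (by omega) (by omega) (by omega)
                    have h7 : j - 1 + 1 = j := by omega
                    rw [h7] at heq
                    rw [heq, h0]; rfl
                · exact hnd ⟨j, by omega, hjc',
                    ⟨hjc', fun i hi hij => hseg i hij hi,
                      fun i hi hij => hBmid i (by omega) hi, h0, hc'J⟩⟩
            have hlast : (D r (c'-1)).right = true := by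
              have heq := hH r (c'-1) hr1 (by omega) (by omega) (by omega)
              have h7 : c' - 1 + 1 = c' := by omega
              rw [h7] at heq
              rw [heq, hp]; rfl
            exact walk (c' - 1 - c) (c'-1) (by omega) (by omega)
              (fun i hi hi' => absurd hi' (by omega)) hlast
          rcases light_tiles (hf1 c' hcc' hc'n) with h0 | h0 | h0 | h0 | h0
          · rw [h0] at hdn; exact absurd hdn (by decide)
          · exact Or.inr h0
          · exact absurd h0 hnp
          · exact Or.inl h0
          · rw [h0] at hdn; exact absurd hdn (by decide)
        refine ⟨?_, ?_, ?_⟩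
        · intro j h1 h2
          rw [markIfJ_eval _ (r+1) c' r j (by omega)]
          by_cases h3 : j < c
          · rw [undroop_out (unmark D r c) r c c' r j (by omega) (by omega),
              unmark_eval D r c r j (by omega)]
            exact hwinr j h1 h3
          · by_cases h4 : j = c
            · subst h4; exact hUrc hcc'
            · by_cases h5 : j = c'
              · subst h5; exact hUrρ hcc' hOr
              · exact hUmr j (by omega) (by omega) le_rfl
        · intro j h1 h2
          rw [markIfJ_eval _ (r+1) c' (r+1) j (by omega)]
          by_cases h3 : j < c
          · rw [undroop_out (unmark D r c) r c c' (r+1) j (by omega) (by omega),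
              unmark_eval D r c (r+1) j (by omega)]
            exact hf3 j (by omega) h2
          · by_cases h4 : j = c
            · subst h4; exact hUr1c hcc'
            · exact hUm1 j (by omega) h2 le_rfl
        · have h6 : undroop (unmark D r c) r c c' (r+1) c' = Tile.blank := by
            rw [undroop_r1d (unmark D r c) r c c' hcc',
              unmark_eval D r c (r+1) c' (by omega), hc'J]
            rfl
          have h7 : markIfJ (undroop (unmark D r c) r c c') (r+1) c' (r+1) c'
              = Tile.blank := by
            unfold markIfJ
            rw [if_neg (by simp [h6]), h6]
          rw [h7]
          exact iff_of_false (by decide) (hnotstar hc'J)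
    · -- Case D
      obtain ⟨-, hPSr, hPSr1, hrρ, hc'J⟩ := hdc
      have hρplus : D (r+1) ρ = Tile.plus := by
        have hup2 : (D (r+1) ρ).up = true := by
          rw [← hV r ρ hr1 hrn (by omega) (by omega), hrρ]; rfl
        rcases hBmid ρ hcρ hρc' with h0 | h0
        · rw [h0] at hup2; exact absurd hup2 (by decide)
        · exact h0
      refine ⟨?_, ?_, ?_⟩
      · intro j h1 h2
        rw [markIfJ_eval _ (r+1) c' r j (by omega)]
        by_cases h3 : j < c
        · rw [undroop_out (unmark D r c) r c ρ r j (by omega) (by omega),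
            unmark_eval D r c r j (by omega)]
          exact hwinr j h1 h3
        · by_cases h4 : j = c
          · subst h4; exact hUrc hcρ
          · by_cases h5 : j < ρ
            · exact hUmr j (by omega) h5 (by omega)
            · by_cases h6 : j = ρ
              · rw [h6]; exact hUrρ hcρ (Or.inl hrρ)
              · rw [undroop_out (unmark D r c) r c ρ r j (by omega) (by omega),
                  unmark_eval D r c r j (by omega)]
                exact hf1 j (by omega) (by omega)
      · intro j h1 h2
        rw [markIfJ_eval _ (r+1) c' (r+1) j (by omega)]
        by_cases h3 : j < c
        · rw [undroop_out (unmark D r c) r c ρ (r+1) j (by omega) (by omega),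
            unmark_eval D r c (r+1) j (by omega)]
          exact hf3 j (by omega) h2
        · by_cases h4 : j = c
          · subst h4; exact hUr1c hcρ
          · by_cases h5 : j < ρ
            · exact hUm1 j (by omega) h5 (by omega)
            · by_cases h6 : j = ρ
              · rw [h6]
                have h7 : undroop (unmark D r c) r c ρ (r+1) ρ = Tile.rtile := by
                  rw [undroop_r1d (unmark D r c) r c ρ hcρ,
                    unmark_eval D r c (r+1) ρ (by omega), hρplus]
                  rfl
                rw [h7]; decide
              · rw [undroop_out (unmark D r c) r c ρ (r+1) j (by omega) (by omega),
                  unmark_eval D r c (r+1) j (by omega)]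
                exact hf3 j (by omega) h2
      · have h6 : undroop (unmark D r c) r c ρ (r+1) c' = Tile.jtile := by
          rw [undroop_out (unmark D r c) r c ρ (r+1) c' (by omega) (by omega),
            unmark_eval D r c (r+1) c' (by omega)]
          exact hc'J
        have h7 : markIfJ (undroop (unmark D r c) r c ρ) (r+1) c' (r+1) c'
            = Tile.mjtile := by
          unfold markIfJ
          rw [if_pos ⟨rfl, rfl, h6⟩]
        rw [h7]
        exact iff_of_false (by decide) (hnotstar hc'J)
  · -- no undroop: Case C̸
    simp only [Fmove, if_neg hPS]
    have hmjc : D r c = Tile.mjtile := by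
      rcases hb with ⟨h0, hbc⟩ | ⟨hmj, -, -, -, -⟩
      · exfalso
        apply hPS
        intro j hj hj'
        exact absurd hj (by omega)
      · exact hmj
    refine ⟨?_, ?_, ?_⟩
    · intro j h1 h2
      rw [markIfJ_eval _ (r+1) c' r j (by omega)]
      by_cases h3 : j = c
      · rw [h3]
        have h4 : unmark D r c r c = Tile.jtile := by
          unfold unmark
          rw [if_pos ⟨rfl, rfl, hmjc⟩]
        rw [h4]; decide
      · rw [unmark_eval D r c r j (by omega)]
        by_cases h4 : j < c
        · exact hwinr j h1 h4
        · exact hf1 j (by omega) (by omega)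
    · intro j h1 h2
      rw [markIfJ_eval _ (r+1) c' (r+1) j (by omega),
        unmark_eval D r c (r+1) j (by omega)]
      exact hf3 j (by omega) h2
    · have h6 : unmark D r c (r+1) c' = D (r+1) c' :=
        unmark_eval D r c (r+1) c' (by omega)
      have hsplit : D (r+1) c' = Tile.jtile ∨ IsfStarTarget n D r c c' := by
        rcases hρ with ⟨hTO, -⟩ | ⟨hft, -, -, -⟩
        · rcases hTO with hstar | hO
          · exact Or.inr hstar
          · exact Or.inl hO.1.2.2.2.2.2.2.2.2.1
        · exact Or.inl hft.2.2.2.2.2.2.2.2.1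
      rcases hsplit with hc'J | hstar
      · have h7 : markIfJ (unmark D r c) (r+1) c' (r+1) c' = Tile.mjtile := by
          unfold markIfJ
          rw [if_pos ⟨rfl, rfl, h6.trans hc'J⟩]
        rw [h7]
        exact iff_of_false (by decide) (hnotstar hc'J)
      · have hplus := hc'plus hstar
        have h7 : markIfJ (unmark D r c) (r+1) c' (r+1) c' = Tile.plus := by
          unfold markIfJ
          rw [if_neg (by simp [h6, hplus]), h6, hplus]
        rw [h7]
        exact iff_of_true (by decide) hstar

end BPD
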